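/- Let d ≥ 1, γ > d/2 + 1 and s ∈ [0, γ]. There exists C = C(γ, d, s) such that for every mean-zero divergence-free vector field u ∈ H^γ(𝕋^d; ℝ^d) and every mean-zero f ∈ H^s(𝕋^d), the commutator [Λ^s, u·∇]f = Λ^s(u·∇f) − u·∇(Λ^s f) satisfies ‖[Λ^s, u·∇]f‖_{L²} ≤ C ‖u‖_{H^γ} ‖f‖_{H^s}, where Λ^s is the Fourier multiplier with symbol |k|^s. -/

import Mathlib

open scoped BigOperators

/-- Euclidean norm `|k|` of a frequency `k ∈ ℤ^d`. -/
noncomputable def freqNorm {d : ℕ} (k : Fin d → ℤ) : ℝ :=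
  Real.sqrt (∑ i, ((k i : ℝ)) ^ 2)

/-- Homogeneous Sobolev norm `‖f‖_{H^s}` of a mean-zero scalar given by its (finitely
supported) Fourier coefficients: `(Σ_k |k|^{2s} |f̂(k)|²)^{1/2}`. -/
noncomputable def hsNorm {d : ℕ} (s : ℝ) (f : (Fin d → ℤ) →₀ ℂ) : ℝ :=
  Real.sqrt (∑ k ∈ f.support, freqNorm k ^ (2 * s) * ‖f k‖ ^ 2)

/-- Homogeneous Sobolev norm `‖u‖_{H^s}` of a vector field given by its Fourier
coefficients. -/
noncomputable def hsNormVec {d : ℕ} (s : ℝ) (u : (Fin d → ℤ) →₀ (Fin d → ℂ)) : ℝ :=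
  Real.sqrt (∑ k ∈ u.support, freqNorm k ^ (2 * s) * ∑ i, ‖u k i‖ ^ 2)

/-- Fourier coefficient at `k` of the commutator `[Λ^s, u·∇]f`:
`i Σ_ℓ (|k|^s − |k−ℓ|^s) f̂(k−ℓ) ((k−ℓ)·û(ℓ))`. -/
noncomputable def commCoef {d : ℕ} (s : ℝ) (u : (Fin d → ℤ) →₀ (Fin d → ℂ))
    (f : (Fin d → ℤ) →₀ ℂ) (k : Fin d → ℤ) : ℂ :=
  Complex.I * ∑ ℓ ∈ u.support,
    ((freqNorm k ^ s - freqNorm (k - ℓ) ^ s : ℝ) : ℂ) * f (k - ℓ) *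
      ∑ j, ((k j - ℓ j : ℤ) : ℂ) * u ℓ j


section Aux
open Real

lemma freqNorm_nonneg {d : ℕ} (k : Fin d → ℤ) : 0 ≤ freqNorm k := Real.sqrt_nonneg _

lemma one_le_sumsq {d : ℕ} {k : Fin d → ℤ} (hk : k ≠ 0) : (1:ℝ) ≤ ∑ i, ((k i : ℝ)) ^ 2 := by
  obtain ⟨i, hi⟩ : ∃ i, k i ≠ 0 := by
    by_contra h; push_neg at h; exact hk (funext h)
  have h1 : (1:ℝ) ≤ ((k i : ℝ)) ^ 2 := by
    have hab : (1:ℤ) ≤ |k i| := Int.one_le_abs hi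
    have : (1:ℤ) ≤ (k i) ^ 2 := by nlinarith [sq_abs (k i)]
    exact_mod_cast this
  calc (1:ℝ) ≤ ((k i : ℝ)) ^ 2 := h1
    _ ≤ ∑ j, ((k j : ℝ)) ^ 2 :=
        Finset.single_le_sum (f := fun j => ((k j : ℝ)) ^ 2) (fun j _ => sq_nonneg _) (Finset.mem_univ i)

lemma one_le_freqNorm {d : ℕ} {k : Fin d → ℤ} (hk : k ≠ 0) : 1 ≤ freqNorm k := by
  have := one_le_sumsq hk
  calc (1:ℝ) = Real.sqrt 1 := Real.sqrt_one.symm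
    _ ≤ freqNorm k := Real.sqrt_le_sqrt this

lemma freqNorm_abs_sub {d : ℕ} (a b : Fin d → ℤ) :
    |freqNorm a - freqNorm b| ≤ freqNorm (a - b) := by
  set e : (Fin d → ℤ) → EuclideanSpace ℝ (Fin d) :=
    fun k => (WithLp.equiv 2 _).symm (fun i => (k i : ℝ)) with he
  have hnorm : ∀ k, ‖e k‖ = freqNorm k := by
    intro k
    rw [EuclideanSpace.norm_eq, freqNorm]
    congr 1
    refine Finset.sum_congr rfl fun i _ => ?_
    simp [he, WithLp.equiv_symm_apply, PiLp.toLp_apply, sq_abs]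
  have hsub : e a - e b = e (a - b) := by
    ext i
    simp [he, WithLp.equiv_symm_apply, PiLp.toLp_apply, PiLp.sub_apply]
  calc |freqNorm a - freqNorm b| = |‖e a‖ - ‖e b‖| := by rw [hnorm, hnorm]
    _ ≤ ‖e a - e b‖ := abs_norm_sub_norm_le _ _
    _ = freqNorm (a - b) := by rw [hsub, hnorm]



lemma rpow_sub_rpow_le {a b s : ℝ} (ha : 0 < a) (hab : a ≤ b) (hs : 0 ≤ s) :
    b ^ s - a ^ s ≤ s * (b - a) * (a ^ (s - 1) + b ^ (s - 1)) := by
  have hb : 0 < b := lt_of_lt_of_le ha hab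
  rcases le_total s 1 with h1 | h1
  · -- b^s - a^s ≤ s * (b-a) * a^(s-1)
    have hba : (0:ℝ) ≤ (b - a) / a := div_nonneg (by linarith) ha.le
    have hb' : b = a * (1 + (b - a) / a) := by field_simp; ring
    have key : b ^ s ≤ a ^ s * (1 + s * ((b - a) / a)) := by
      calc b ^ s = (a * (1 + (b - a) / a)) ^ s := by rw [← hb']
        _ = a ^ s * (1 + (b - a) / a) ^ s :=
            Real.mul_rpow ha.le (by linarith)
        _ ≤ a ^ s * (1 + s * ((b - a) / a)) := by
            have := rpow_one_add_le_one_add_mul_self (s := (b - a) / a) (by linarith) hs h1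
            exact mul_le_mul_of_nonneg_left this (Real.rpow_nonneg ha.le s)
    have hsub : a ^ (s - 1) = a ^ s / a := Real.rpow_sub_one ha.ne' s
    have h2 : b ^ s - a ^ s ≤ s * (b - a) * (a ^ s / a) := by
      have e : a ^ s * (1 + s * ((b - a) / a)) = a ^ s + s * (b - a) * (a ^ s / a) := by
        field_simp
      rw [e] at key; linarith
    have hpos : 0 ≤ s * (b - a) * b ^ (s - 1) := by
      have : (0:ℝ) ≤ b ^ (s - 1) := Real.rpow_nonneg hb.le _
      have : (0:ℝ) ≤ b - a := by linarith
      positivity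
    rw [hsub]; nlinarith [Real.rpow_nonneg hb.le (s-1), sub_nonneg.2 hab, hs]
  · -- b^s - a^s ≤ s * (b-a) * b^(s-1)
    have ht0 : (0:ℝ) ≤ (b - a) / b := div_nonneg (by linarith) hb.le
    have ht1 : (b - a) / b ≤ 1 := by
      rw [div_le_one hb]; linarith
    have ha' : a = b * (1 + (-((b - a) / b))) := by field_simp; ring
    have key : b ^ s * (1 + s * (-((b - a) / b))) ≤ a ^ s := by
      calc b ^ s * (1 + s * (-((b - a) / b)))
          ≤ b ^ s * (1 + (-((b - a) / b))) ^ s := by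
            have := one_add_mul_self_le_rpow_one_add (s := -((b - a) / b)) (by linarith) h1
            exact mul_le_mul_of_nonneg_left this (Real.rpow_nonneg hb.le s)
        _ = (b * (1 + (-((b - a) / b)))) ^ s :=
            (Real.mul_rpow hb.le (by linarith)).symm
        _ = a ^ s := by rw [← ha']
    have hsub : b ^ (s - 1) = b ^ s / b := Real.rpow_sub_one hb.ne' s
    have h2 : b ^ s - a ^ s ≤ s * (b - a) * (b ^ s / b) := by
      have e : b ^ s * (1 + s * (-((b - a) / b))) = b ^ s - s * (b - a) * (b ^ s / b) := by
        field_simp; ring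
      rw [e] at key; linarith
    have hpos : 0 ≤ s * (b - a) * a ^ (s - 1) := by
      have h3 : (0:ℝ) ≤ a ^ (s - 1) := Real.rpow_nonneg ha.le _
      have h4 : (0:ℝ) ≤ b - a := by linarith
      positivity
    rw [hsub]; nlinarith

set_option maxHeartbeats 1000000 in
lemma kernel_bound {γ s x y z : ℝ} (hs : 0 ≤ s) (hsγ : s ≤ γ)
    (hx : 1 ≤ x) (hy : 1 ≤ y) (hz : 1 ≤ z) (hzx : |z - x| ≤ y) :
    |z ^ s - x ^ s| * x ≤
      (s * 2 ^ (s + 2) + 2 ^ (s + 1) + 4) * (y * x ^ s + y ^ γ * x ^ (1 + s - γ)) := by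
  have hx0 : (0:ℝ) < x := lt_of_lt_of_le one_pos hx
  have hy0 : (0:ℝ) < y := lt_of_lt_of_le one_pos hy
  have hz0 : (0:ℝ) < z := lt_of_lt_of_le one_pos hz
  have habs := abs_le.mp hzx
  have h2s : (1:ℝ) ≤ 2 ^ s := by
    calc (1:ℝ) = 2 ^ (0:ℝ) := (rpow_zero 2).symm
      _ ≤ 2 ^ s := rpow_le_rpow_of_exponent_le one_le_two hs
  have hC1 : (2:ℝ) ^ (s+1) = 2 * 2 ^ s := by
    rw [rpow_add two_pos, rpow_one, mul_comm]
  have hC2 : (2:ℝ) ^ (s+2) = 4 * 2 ^ s := by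
    rw [rpow_add two_pos, mul_comm]
    norm_num
  have hxs : (0:ℝ) ≤ x ^ s := rpow_nonneg hx0.le s
  have hys : (0:ℝ) ≤ y ^ s := rpow_nonneg hy0.le s
  have hzs0 : (0:ℝ) ≤ z ^ s := rpow_nonneg hz0.le s
  have hxs1 : (0:ℝ) ≤ x ^ (s-1) := rpow_nonneg hx0.le _
  have hterm1 : (0:ℝ) ≤ y * x ^ s := mul_nonneg hy0.le hxs
  have hterm2 : (0:ℝ) ≤ y ^ γ * x ^ (1 + s - γ) :=
    mul_nonneg (rpow_nonneg hy0.le γ) (rpow_nonneg hx0.le (1 + s - γ))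
  have hCpos : (0:ℝ) ≤ s * 2 ^ (s+2) + 2 ^ (s+1) + 4 := by
    have := rpow_nonneg (by norm_num : (0:ℝ) ≤ 2) (s+2)
    have := rpow_nonneg (by norm_num : (0:ℝ) ≤ 2) (s+1)
    have := mul_nonneg hs (rpow_nonneg (by norm_num : (0:ℝ) ≤ 2) (s+2))
    linarith
  have hyX : (0:ℝ) ≤ y * x ^ (s-1) := mul_nonneg hy0.le hxs1
  rcases le_total x y with hxy | hyx
  · -- high frequency case : x ≤ y
    have hzb : z ≤ 2 * y := by linarith
    have hzs : z ^ s ≤ 2 ^ s * y ^ s := by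
      calc z ^ s ≤ (2 * y) ^ s := rpow_le_rpow hz0.le hzb hs
        _ = 2 ^ s * y ^ s := mul_rpow (by norm_num) hy0.le
    have hxs' : x ^ s ≤ y ^ s := rpow_le_rpow hx0.le hxy hs
    have hys2 : y ^ s ≤ 2 ^ s * y ^ s := by nlinarith
    have hb1 : |z ^ s - x ^ s| ≤ 2 ^ (s+1) * y ^ s := by
      rw [abs_le]
      constructor
      · rw [hC1]; nlinarith
      · rw [hC1]; nlinarith
    have hb2 : y ^ s * x ≤ y ^ γ * x ^ (1 + s - γ) := by
      have e1 : y ^ γ = y ^ s * y ^ (γ - s) := by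
        rw [← rpow_add hy0]; ring_nf
      have e2 : x = x ^ (γ - s) * x ^ (1 + s - γ) := by
        rw [← rpow_add hx0]; ring_nf
        exact (rpow_one x).symm
      have e3 : x ^ (γ - s) ≤ y ^ (γ - s) := rpow_le_rpow hx0.le hxy (by linarith)
      calc y ^ s * x = y ^ s * (x ^ (γ - s) * x ^ (1 + s - γ)) := by rw [← e2]
        _ ≤ y ^ s * (y ^ (γ - s) * x ^ (1 + s - γ)) := by
            have h4 := rpow_nonneg hx0.le (1 + s - γ)
            apply mul_le_mul_of_nonneg_left _ hys
            exact mul_le_mul_of_nonneg_right e3 h4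
        _ = y ^ γ * x ^ (1 + s - γ) := by rw [e1]; ring
    have h2pos : (0:ℝ) ≤ 2 ^ (s+1) := rpow_nonneg (by norm_num) _
    calc |z ^ s - x ^ s| * x ≤ (2 ^ (s+1) * y ^ s) * x := by
          exact mul_le_mul_of_nonneg_right hb1 hx0.le
      _ = 2 ^ (s+1) * (y ^ s * x) := by ring
      _ ≤ 2 ^ (s+1) * (y ^ γ * x ^ (1 + s - γ)) := mul_le_mul_of_nonneg_left hb2 h2pos
      _ ≤ (s * 2 ^ (s + 2) + 2 ^ (s + 1) + 4) * (y * x ^ s + y ^ γ * x ^ (1 + s - γ)) := by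
          have hA : 2 ^ (s+1) * (y ^ γ * x ^ (1 + s - γ)) ≤
              (s * 2 ^ (s + 2) + 2 ^ (s + 1) + 4) * (y ^ γ * x ^ (1 + s - γ)) := by
            apply mul_le_mul_of_nonneg_right _ hterm2
            have := mul_nonneg hs (rpow_nonneg (by norm_num : (0:ℝ) ≤ 2) (s+2))
            linarith
          have hB : (0:ℝ) ≤ (s * 2 ^ (s + 2) + 2 ^ (s + 1) + 4) * (y * x ^ s) :=
            mul_nonneg hCpos hterm1
          calc 2 ^ (s+1) * (y ^ γ * x ^ (1 + s - γ))
              ≤ (s * 2 ^ (s + 2) + 2 ^ (s + 1) + 4) * (y ^ γ * x ^ (1 + s - γ)) := hA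
            _ ≤ (s * 2 ^ (s + 2) + 2 ^ (s + 1) + 4) * (y * x ^ s + y ^ γ * x ^ (1 + s - γ)) := by
                rw [mul_add]; linarith
  · -- low frequency case : y ≤ x
    have key : |z ^ s - x ^ s| ≤ (s * 2 ^ (s+2) + 4) * (y * x ^ (s-1)) := by
      rcases le_total x z with hxz | hzx'
      · -- z ≥ x
        have hzx2 : z ≤ 2 * x := by linarith
        have h1 := rpow_sub_rpow_le hx0 hxz hs
        have hz1 : z ^ (s-1) ≤ 2 ^ s * x ^ (s-1) := by
          rcases le_total s 1 with h1' | h1'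
          · calc z ^ (s-1) ≤ x ^ (s-1) := rpow_le_rpow_of_nonpos hx0 hxz (by linarith)
              _ ≤ 2 ^ s * x ^ (s-1) := by nlinarith
          · calc z ^ (s-1) ≤ (2*x) ^ (s-1) := rpow_le_rpow hz0.le hzx2 (by linarith)
              _ = 2 ^ (s-1) * x ^ (s-1) := mul_rpow (by norm_num) hx0.le
              _ ≤ 2 ^ s * x ^ (s-1) := by
                  have h5 : (2:ℝ) ^ (s-1) ≤ 2 ^ s := rpow_le_rpow_of_exponent_le one_le_two (by linarith)
                  exact mul_le_mul_of_nonneg_right h5 hxs1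
        have habs' : |z ^ s - x ^ s| = z ^ s - x ^ s :=
          abs_of_nonneg (by linarith [rpow_le_rpow hx0.le hxz hs])
        rw [habs']
        have hzxy : z - x ≤ y := habs.2
        have hzx0 : (0:ℝ) ≤ z - x := by linarith
        have hsumpos : (0:ℝ) ≤ x ^ (s-1) + z ^ (s-1) := by
          have := rpow_nonneg hz0.le (s-1); linarith
        calc z ^ s - x ^ s ≤ s * (z - x) * (x ^ (s-1) + z ^ (s-1)) := h1
          _ ≤ s * y * (x ^ (s-1) + z ^ (s-1)) := by
              apply mul_le_mul_of_nonneg_right _ hsumpos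
              exact mul_le_mul_of_nonneg_left hzxy hs
          _ ≤ s * y * (x ^ (s-1) + 2 ^ s * x ^ (s-1)) := by
              apply mul_le_mul_of_nonneg_left _ (mul_nonneg hs hy0.le)
              linarith
          _ = (s * (1 + 2 ^ s)) * (y * x ^ (s-1)) := by ring
          _ ≤ (s * (4 * 2 ^ s)) * (y * x ^ (s-1)) := by
              apply mul_le_mul_of_nonneg_right _ hyX
              apply mul_le_mul_of_nonneg_left _ hs
              linarith
          _ = (s * 2 ^ (s+2)) * (y * x ^ (s-1)) := by rw [hC2]
          _ ≤ (s * 2 ^ (s+2) + 4) * (y * x ^ (s-1)) := by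
              apply mul_le_mul_of_nonneg_right _ hyX
              linarith
      · -- z ≤ x
        have habs' : |z ^ s - x ^ s| = x ^ s - z ^ s := by
          rw [abs_of_nonpos (by linarith [rpow_le_rpow hz0.le hzx' hs] : z ^ s - x ^ s ≤ 0), neg_sub]
        rw [habs']
        rcases le_total (x/2) z with hhalf | hhalf
        · have h1 := rpow_sub_rpow_le hz0 hzx' hs
          have hz1 : z ^ (s-1) ≤ 2 * x ^ (s-1) := by
            rcases le_total s 1 with h1' | h1'
            · have hx2 : (0:ℝ) < x/2 := by linarith
              calc z ^ (s-1) ≤ (x/2) ^ (s-1) := rpow_le_rpow_of_nonpos hx2 hhalf (by linarith)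
                _ = x ^ (s-1) / 2 ^ (s-1) := div_rpow hx0.le (by norm_num : (0:ℝ) ≤ 2) (s-1)
                _ = x ^ (s-1) * 2 ^ (-(s-1)) := by
                    rw [rpow_neg (by norm_num : (0:ℝ) ≤ 2), div_eq_mul_inv]
                _ ≤ x ^ (s-1) * 2 := by
                    have h6 : (2:ℝ) ^ (-(s-1)) ≤ 2 ^ (1:ℝ) :=
                      rpow_le_rpow_of_exponent_le one_le_two (by linarith)
                    rw [rpow_one] at h6
                    exact mul_le_mul_of_nonneg_left h6 hxs1
                _ = 2 * x ^ (s-1) := by ring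
            · calc z ^ (s-1) ≤ x ^ (s-1) := rpow_le_rpow hz0.le hzx' (by linarith)
                _ ≤ 2 * x ^ (s-1) := by linarith
          have hxzy : x - z ≤ y := by linarith [habs.1]
          have hxz0 : (0:ℝ) ≤ x - z := by linarith
          have hsumpos : (0:ℝ) ≤ z ^ (s-1) + x ^ (s-1) := by
            have := rpow_nonneg hz0.le (s-1); linarith
          calc x ^ s - z ^ s ≤ s * (x - z) * (z ^ (s-1) + x ^ (s-1)) := h1
            _ ≤ s * y * (z ^ (s-1) + x ^ (s-1)) := by
                apply mul_le_mul_of_nonneg_right _ hsumpos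
                exact mul_le_mul_of_nonneg_left hxzy hs
            _ ≤ s * y * (3 * x ^ (s-1)) := by
                apply mul_le_mul_of_nonneg_left _ (mul_nonneg hs hy0.le)
                linarith
            _ = (s * 3) * (y * x ^ (s-1)) := by ring
            _ ≤ (s * 2 ^ (s+2) + 4) * (y * x ^ (s-1)) := by
                apply mul_le_mul_of_nonneg_right _ hyX
                rw [hC2]; nlinarith
        · -- z ≤ x/2, so y ≥ x/2
          have hy2 : x / 2 ≤ y := by linarith [habs.1]
          have hxx : x ^ (s-1) * x = x ^ s := by
            rw [rpow_sub_one hx0.ne']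
            field_simp
          calc x ^ s - z ^ s ≤ x ^ s := by linarith
            _ = x ^ (s-1) * x := hxx.symm
            _ ≤ x ^ (s-1) * (2 * y) := mul_le_mul_of_nonneg_left (by linarith) hxs1
            _ = 2 * (y * x ^ (s-1)) := by ring
            _ ≤ (s * 2 ^ (s+2) + 4) * (y * x ^ (s-1)) := by
                apply mul_le_mul_of_nonneg_right _ hyX
                have := mul_nonneg hs (rpow_nonneg (by norm_num : (0:ℝ) ≤ 2) (s+2))
                linarith
    have hxx : x ^ (s-1) * x = x ^ s := by
      rw [rpow_sub_one hx0.ne']; field_simp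
    calc |z ^ s - x ^ s| * x ≤ ((s * 2 ^ (s+2) + 4) * (y * x ^ (s-1))) * x :=
          mul_le_mul_of_nonneg_right key hx0.le
      _ = (s * 2 ^ (s+2) + 4) * (y * (x ^ (s-1) * x)) := by ring
      _ = (s * 2 ^ (s+2) + 4) * (y * x ^ s) := by rw [hxx]
      _ ≤ (s * 2 ^ (s + 2) + 2 ^ (s + 1) + 4) * (y * x ^ s + y ^ γ * x ^ (1 + s - γ)) := by
          have h7 : (0:ℝ) ≤ 2 ^ (s+1) := rpow_nonneg (by norm_num) _
          have h8 : (s * 2 ^ (s+2) + 4) * (y * x ^ s) ≤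
              (s * 2 ^ (s + 2) + 2 ^ (s + 1) + 4) * (y * x ^ s) := by
            apply mul_le_mul_of_nonneg_right _ hterm1
            linarith
          have h9 : (0:ℝ) ≤ (s * 2 ^ (s + 2) + 2 ^ (s + 1) + 4) * (y ^ γ * x ^ (1 + s - γ)) :=
            mul_nonneg hCpos hterm2
          rw [mul_add]; linarith


section
variable {α : Type*} [AddCommGroup α] [DecidableEq α]

lemma cs_sqrt {ι : Type*} (s : Finset ι) (a b : ι → ℝ) (ha : ∀ i ∈ s, 0 ≤ a i)
    (hb : ∀ i ∈ s, 0 ≤ b i) :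
    ∑ i ∈ s, a i * b i ≤
      Real.sqrt (∑ i ∈ s, a i ^ 2) * Real.sqrt (∑ i ∈ s, b i ^ 2) := by
  have h := Finset.sum_mul_sq_le_sq_mul_sq s a b
  have h0 : (0:ℝ) ≤ ∑ i ∈ s, a i * b i :=
    Finset.sum_nonneg fun i hi => mul_nonneg (ha i hi) (hb i hi)
  calc ∑ i ∈ s, a i * b i = Real.sqrt ((∑ i ∈ s, a i * b i) ^ 2) := (Real.sqrt_sq h0).symm
    _ ≤ Real.sqrt ((∑ i ∈ s, a i ^ 2) * ∑ i ∈ s, b i ^ 2) := Real.sqrt_le_sqrt h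
    _ = Real.sqrt (∑ i ∈ s, a i ^ 2) * Real.sqrt (∑ i ∈ s, b i ^ 2) :=
        Real.sqrt_mul (Finset.sum_nonneg fun i _ => sq_nonneg _) _

lemma shift_sum_le (B M : Finset α) (c : α → ℝ) (hc : ∀ m, 0 ≤ c m)
    (hcM : ∀ m ∉ M, c m = 0) (ℓ : α) :
    ∑ k ∈ B, c (k - ℓ) ≤ ∑ m ∈ M, c m := by
  have hinj : ∀ x ∈ B, ∀ y ∈ B, x - ℓ = y - ℓ → x = y := by
    intro x _ y _ h
    have := congrArg (· + ℓ) h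
    simpa using this
  rw [← Finset.sum_image hinj]
  calc ∑ m ∈ B.image (· - ℓ), c m ≤ ∑ m ∈ B.image (· - ℓ) ∪ M, c m :=
        Finset.sum_le_sum_of_subset_of_nonneg Finset.subset_union_left
          (fun m _ _ => hc m)
    _ = ∑ m ∈ M, c m :=
        (Finset.sum_subset Finset.subset_union_right
          (fun m _ hnm => hcM m hnm)).symm

lemma shift_sum_le' (T M : Finset α) (c : α → ℝ) (hc : ∀ m, 0 ≤ c m)
    (hcM : ∀ m ∉ M, c m = 0) (k : α) :
    ∑ ℓ ∈ T, c (k - ℓ) ≤ ∑ m ∈ M, c m := by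
  have hinj : ∀ x ∈ T, ∀ y ∈ T, k - x = k - y → x = y := by
    intro x _ y _ h
    have : -x = -y := by
      have := congrArg (· - k) h
      simpa using this
    simpa using congrArg Neg.neg this
  rw [← Finset.sum_image hinj]
  calc ∑ m ∈ T.image (k - ·), c m ≤ ∑ m ∈ T.image (k - ·) ∪ M, c m :=
        Finset.sum_le_sum_of_subset_of_nonneg Finset.subset_union_left
          (fun m _ _ => hc m)
    _ = ∑ m ∈ M, c m :=
        (Finset.sum_subset Finset.subset_union_right
          (fun m _ hnm => hcM m hnm)).symm

lemma young1 (B T M : Finset α) (a b : α → ℝ) (ha : ∀ ℓ, 0 ≤ a ℓ) (hb : ∀ m, 0 ≤ b m)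
    (hbM : ∀ m ∉ M, b m = 0) :
    ∑ k ∈ B, (∑ ℓ ∈ T, a ℓ * b (k - ℓ)) ^ 2 ≤
      (∑ ℓ ∈ T, a ℓ) ^ 2 * ∑ m ∈ M, b m ^ 2 := by
  have hA : (0:ℝ) ≤ ∑ ℓ ∈ T, a ℓ := Finset.sum_nonneg fun ℓ _ => ha ℓ
  have step1 : ∀ k, (∑ ℓ ∈ T, a ℓ * b (k - ℓ)) ^ 2 ≤
      (∑ ℓ ∈ T, a ℓ) * (∑ ℓ ∈ T, a ℓ * b (k - ℓ) ^ 2) := by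
    intro k
    have e : ∀ ℓ ∈ T, a ℓ * b (k - ℓ) =
        Real.sqrt (a ℓ) * (Real.sqrt (a ℓ) * b (k - ℓ)) := by
      intro ℓ _
      rw [← mul_assoc, Real.mul_self_sqrt (ha ℓ)]
    rw [Finset.sum_congr rfl e]
    have h := Finset.sum_mul_sq_le_sq_mul_sq T (fun ℓ => Real.sqrt (a ℓ))
      (fun ℓ => Real.sqrt (a ℓ) * b (k - ℓ))
    refine le_trans h (le_of_eq ?_)
    congr 1
    · exact Finset.sum_congr rfl fun ℓ _ => Real.sq_sqrt (ha ℓ)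
    · refine Finset.sum_congr rfl fun ℓ _ => ?_
      rw [mul_pow, Real.sq_sqrt (ha ℓ)]
  calc ∑ k ∈ B, (∑ ℓ ∈ T, a ℓ * b (k - ℓ)) ^ 2
      ≤ ∑ k ∈ B, (∑ ℓ ∈ T, a ℓ) * (∑ ℓ ∈ T, a ℓ * b (k - ℓ) ^ 2) :=
        Finset.sum_le_sum fun k _ => step1 k
    _ = (∑ ℓ ∈ T, a ℓ) * ∑ k ∈ B, (∑ ℓ ∈ T, a ℓ * b (k - ℓ) ^ 2) := by
        rw [← Finset.mul_sum]
    _ = (∑ ℓ ∈ T, a ℓ) * ∑ ℓ ∈ T, a ℓ * (∑ k ∈ B, b (k - ℓ) ^ 2) := by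
        congr 1
        rw [Finset.sum_comm]
        exact Finset.sum_congr rfl fun ℓ _ => (Finset.mul_sum _ _ _).symm
    _ ≤ (∑ ℓ ∈ T, a ℓ) * ∑ ℓ ∈ T, a ℓ * (∑ m ∈ M, b m ^ 2) := by
        apply mul_le_mul_of_nonneg_left _ hA
        apply Finset.sum_le_sum
        intro ℓ _
        apply mul_le_mul_of_nonneg_left _ (ha ℓ)
        exact shift_sum_le B M (fun m => b m ^ 2) (fun m => sq_nonneg _)
          (fun m hm => by simp [hbM m hm]) ℓ
    _ = (∑ ℓ ∈ T, a ℓ) ^ 2 * ∑ m ∈ M, b m ^ 2 := by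
        rw [← Finset.sum_mul]; ring

lemma young2 (B T M : Finset α) (a b : α → ℝ) (ha : ∀ ℓ, 0 ≤ a ℓ) (hb : ∀ m, 0 ≤ b m)
    (hbM : ∀ m ∉ M, b m = 0) :
    ∑ k ∈ B, (∑ ℓ ∈ T, a ℓ * b (k - ℓ)) ^ 2 ≤
      (∑ m ∈ M, b m) ^ 2 * ∑ ℓ ∈ T, a ℓ ^ 2 := by
  have hB : (0:ℝ) ≤ ∑ m ∈ M, b m := Finset.sum_nonneg fun m _ => hb m
  have step1 : ∀ k, (∑ ℓ ∈ T, a ℓ * b (k - ℓ)) ^ 2 ≤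
      (∑ m ∈ M, b m) * (∑ ℓ ∈ T, b (k - ℓ) * a ℓ ^ 2) := by
    intro k
    have e : ∀ ℓ ∈ T, a ℓ * b (k - ℓ) =
        (Real.sqrt (b (k - ℓ)) * a ℓ) * Real.sqrt (b (k - ℓ)) := by
      intro ℓ _
      have h := Real.mul_self_sqrt (hb (k - ℓ))
      linear_combination (-(a ℓ)) * h
    rw [Finset.sum_congr rfl e]
    have h := Finset.sum_mul_sq_le_sq_mul_sq T (fun ℓ => Real.sqrt (b (k - ℓ)) * a ℓ)
      (fun ℓ => Real.sqrt (b (k - ℓ)))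
    have e2 : ∑ ℓ ∈ T, (Real.sqrt (b (k - ℓ)) * a ℓ) ^ 2 = ∑ ℓ ∈ T, b (k - ℓ) * a ℓ ^ 2 :=
      Finset.sum_congr rfl fun ℓ _ => by rw [mul_pow, Real.sq_sqrt (hb _)]
    have e3 : ∑ ℓ ∈ T, (Real.sqrt (b (k - ℓ))) ^ 2 = ∑ ℓ ∈ T, b (k - ℓ) :=
      Finset.sum_congr rfl fun ℓ _ => Real.sq_sqrt (hb _)
    rw [e2, e3] at h
    refine le_trans h ?_
    rw [mul_comm]
    apply mul_le_mul_of_nonneg_right _ (Finset.sum_nonneg fun ℓ _ =>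
      mul_nonneg (hb _) (sq_nonneg _))
    exact shift_sum_le' T M b hb hbM k
  calc ∑ k ∈ B, (∑ ℓ ∈ T, a ℓ * b (k - ℓ)) ^ 2
      ≤ ∑ k ∈ B, (∑ m ∈ M, b m) * (∑ ℓ ∈ T, b (k - ℓ) * a ℓ ^ 2) :=
        Finset.sum_le_sum fun k _ => step1 k
    _ = (∑ m ∈ M, b m) * ∑ k ∈ B, (∑ ℓ ∈ T, b (k - ℓ) * a ℓ ^ 2) := by
        rw [← Finset.mul_sum]
    _ = (∑ m ∈ M, b m) * ∑ ℓ ∈ T, a ℓ ^ 2 * (∑ k ∈ B, b (k - ℓ)) := by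
        congr 1
        rw [Finset.sum_comm]
        refine Finset.sum_congr rfl fun ℓ _ => ?_
        rw [Finset.mul_sum]
        exact Finset.sum_congr rfl fun k _ => by ring
    _ ≤ (∑ m ∈ M, b m) * ∑ ℓ ∈ T, a ℓ ^ 2 * (∑ m ∈ M, b m) := by
        apply mul_le_mul_of_nonneg_left _ hB
        apply Finset.sum_le_sum
        intro ℓ _
        apply mul_le_mul_of_nonneg_left _ (sq_nonneg _)
        exact shift_sum_le B M b hb hbM ℓ
    _ = (∑ m ∈ M, b m) ^ 2 * ∑ ℓ ∈ T, a ℓ ^ 2 := by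
        rw [← Finset.sum_mul]; ring

end

lemma summable_phi {r : ℝ} (hr : 1 < 2 * r) :
    Summable (fun n : ℤ => ((1:ℝ) + (n:ℝ) ^ 2) ^ (-r)) := by
  have hr0 : (0:ℝ) < r := by linarith
  have hnat : Summable (fun n : ℕ => ((1:ℝ) + (n:ℝ) ^ 2) ^ (-r)) := by
    have hsum : Summable (fun n : ℕ => (((n:ℝ)) ^ (2*r))⁻¹) := Real.summable_nat_rpow_inv.mpr hr
    have hshift : Summable (fun n : ℕ => ((((n:ℝ)) + 1) ^ (2*r))⁻¹) := by
      have h := (summable_nat_add_iff (f := fun n : ℕ => (((n:ℝ)) ^ (2*r))⁻¹) 1).mpr hsum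
      refine h.congr fun n => ?_
      push_cast
      ring_nf
    refine Summable.of_nonneg_of_le (fun n => rpow_nonneg (by positivity) _) ?_
      (hshift.mul_left ((2:ℝ) ^ r))
    intro n
    have hA : (0:ℝ) < 1 + (n:ℝ) ^ 2 := by positivity
    have hn1 : (0:ℝ) < (n:ℝ) + 1 := by positivity
    have h1 : ((n:ℝ) + 1) ^ 2 ≤ 2 * (1 + (n:ℝ) ^ 2) := by nlinarith [sq_nonneg ((n:ℝ) - 1)]
    have e1 : ((n:ℝ) + 1) ^ (2*r) = ((((n:ℝ) + 1) ^ (2:ℕ)) : ℝ) ^ r := by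
      rw [← Real.rpow_natCast ((n:ℝ) + 1) 2, ← Real.rpow_mul hn1.le]
      norm_num
    have h2 : ((((n:ℝ) + 1) ^ (2:ℕ)) : ℝ) ^ r ≤ (2 * (1 + (n:ℝ) ^ 2)) ^ r :=
      rpow_le_rpow (by positivity) h1 hr0.le
    have h3 : ((2:ℝ) * (1 + (n:ℝ) ^ 2)) ^ r = 2 ^ r * (1 + (n:ℝ) ^ 2) ^ r :=
      mul_rpow (by norm_num) hA.le
    have hx2r0 : (0:ℝ) < ((((n:ℝ) + 1) ^ (2:ℕ)) : ℝ) ^ r := rpow_pos_of_pos (by positivity) r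
    have h4 : ((2:ℝ) ^ r * (1 + (n:ℝ) ^ 2) ^ r)⁻¹ ≤ (((((n:ℝ) + 1) ^ (2:ℕ)) : ℝ) ^ r)⁻¹ := by
      apply inv_anti₀ hx2r0
      rw [← h3]; exact h2
    rw [Real.rpow_neg hA.le, e1]
    calc ((1 + (n:ℝ) ^ 2) ^ r)⁻¹
        = 2 ^ r * ((2:ℝ) ^ r * (1 + (n:ℝ) ^ 2) ^ r)⁻¹ := by
          rw [mul_inv, ← mul_assoc, mul_inv_cancel₀ (ne_of_gt (rpow_pos_of_pos two_pos r)),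
            one_mul]
      _ ≤ 2 ^ r * (((((n:ℝ) + 1) ^ (2:ℕ)) : ℝ) ^ r)⁻¹ :=
          mul_le_mul_of_nonneg_left h4 (rpow_nonneg (by norm_num) r)
  apply Summable.of_nat_of_neg
  · exact hnat.congr fun n => by norm_num
  · refine hnat.congr fun n => ?_
    push_cast
    norm_num

lemma lattice_bound (d : ℕ) (hd : 1 ≤ d) {q : ℝ} (hq : (d:ℝ)/2 < q) :
    ∃ S : ℝ, 0 < S ∧ ∀ T : Finset (Fin d → ℤ), (∀ ℓ ∈ T, ℓ ≠ 0) →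
      ∑ ℓ ∈ T, freqNorm ℓ ^ (-(2*q)) ≤ S := by
  have hd0 : (0:ℝ) < d := by exact_mod_cast hd
  have hq0 : (0:ℝ) < q := lt_of_le_of_lt (by positivity) hq
  set r : ℝ := q / d with hrdef
  have hr0 : (0:ℝ) < r := div_pos hq0 hd0
  have hr : 1 < 2 * r := by
    rw [hrdef, show 2 * (q / (d:ℝ)) = 2 * q / d by ring, lt_div_iff₀ hd0]
    linarith
  have hφ := summable_phi hr
  set K := ∑' n : ℤ, ((1:ℝ) + (n:ℝ) ^ 2) ^ (-r) with hK
  have hK1 : (1:ℝ) ≤ K := by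
    have h0 : ((1:ℝ) + (((0:ℤ)):ℝ) ^ 2) ^ (-r) = 1 := by norm_num
    calc (1:ℝ) = ((1:ℝ) + (((0:ℤ)):ℝ) ^ 2) ^ (-r) := h0.symm
      _ ≤ K := Summable.le_tsum hφ 0 (fun i _ => rpow_nonneg (by positivity) _)
  refine ⟨2 ^ q * K ^ d, by positivity, ?_⟩
  intro T hT
  have hφnn : ∀ n : ℤ, (0:ℝ) ≤ ((1:ℝ) + (n:ℝ) ^ 2) ^ (-r) :=
    fun n => rpow_nonneg (by positivity) _
  have hpt : ∀ ℓ ∈ T, freqNorm ℓ ^ (-(2*q)) ≤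
      2 ^ q * ∏ i, ((1:ℝ) + ((ℓ i : ℝ)) ^ 2) ^ (-r) := by
    intro ℓ hℓ
    have hsq := one_le_sumsq (hT ℓ hℓ)
    set t := ∑ i, ((ℓ i : ℝ)) ^ 2 with ht
    have ht0 : (0:ℝ) < t := lt_of_lt_of_le one_pos hsq
    have e0 : freqNorm ℓ ^ (-(2*q)) = t ^ (-q) := by
      rw [freqNorm, Real.sqrt_eq_rpow, ← Real.rpow_mul ht0.le]
      congr 1
      ring
    set P := ∏ i, ((1:ℝ) + ((ℓ i : ℝ)) ^ 2) with hP
    have hP0 : (0:ℝ) < P := Finset.prod_pos fun i _ => by positivity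
    have hPle : P ≤ (2*t) ^ d := by
      calc P ≤ ∏ _i : Fin d, (2*t) := by
            apply Finset.prod_le_prod (fun i _ => by positivity)
            intro i _
            have h5 : ((ℓ i : ℝ)) ^ 2 ≤ t :=
              Finset.single_le_sum (f := fun j => ((ℓ j : ℝ)) ^ 2)
                (fun j _ => sq_nonneg _) (Finset.mem_univ i)
            linarith
        _ = (2*t) ^ d := by rw [Finset.prod_const, Finset.card_univ, Fintype.card_fin]
    have h6 : P ^ r ≤ 2 ^ q * t ^ q := by
      have h5 : P ^ r ≤ ((2*t) ^ d) ^ r := rpow_le_rpow hP0.le hPle hr0.le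
      have e6 : (((2*t) ^ d : ℝ)) ^ r = 2 ^ q * t ^ q := by
        rw [← Real.rpow_natCast (2*t) d, ← Real.rpow_mul (by positivity)]
        have : (d:ℝ) * r = q := by
          rw [hrdef]; field_simp
        rw [this, mul_rpow (by norm_num) ht0.le]
      rw [e6] at h5; exact h5
    have h7 : t ^ (-q) ≤ 2 ^ q * P ^ (-r) := by
      rw [Real.rpow_neg ht0.le, Real.rpow_neg hP0.le]
      have htq0 : (0:ℝ) < t ^ q := rpow_pos_of_pos ht0 q
      have hPr0 : (0:ℝ) < P ^ r := rpow_pos_of_pos hP0 r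
      rw [← div_eq_mul_inv, le_div_iff₀ hPr0]
      calc (t ^ q)⁻¹ * P ^ r ≤ (t ^ q)⁻¹ * (2 ^ q * t ^ q) :=
            mul_le_mul_of_nonneg_left h6 (by positivity)
        _ = 2 ^ q := by field_simp
    have h8 : P ^ (-r) = ∏ i, ((1:ℝ) + ((ℓ i : ℝ)) ^ 2) ^ (-r) :=
      (Real.finset_prod_rpow Finset.univ _ (fun i _ => by positivity) (-r)).symm
    rw [e0, ← h8]
    exact h7
  set J : Fin d → Finset ℤ := fun i => T.image (fun m => m i) with hJ
  calc ∑ ℓ ∈ T, freqNorm ℓ ^ (-(2*q))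
      ≤ ∑ ℓ ∈ T, 2 ^ q * ∏ i, ((1:ℝ) + ((ℓ i : ℝ)) ^ 2) ^ (-r) := Finset.sum_le_sum hpt
    _ = 2 ^ q * ∑ ℓ ∈ T, ∏ i, ((1:ℝ) + ((ℓ i : ℝ)) ^ 2) ^ (-r) := by rw [Finset.mul_sum]
    _ ≤ 2 ^ q * ∑ ℓ ∈ Fintype.piFinset J,
          ∏ i, ((1:ℝ) + ((ℓ i : ℝ)) ^ 2) ^ (-r) := by
        apply mul_le_mul_of_nonneg_left _ (rpow_nonneg (by norm_num) q)
        apply Finset.sum_le_sum_of_subset_of_nonneg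
        · intro ℓ hℓ
          rw [Fintype.mem_piFinset]
          exact fun i => Finset.mem_image_of_mem (fun m => m i) hℓ
        · intro ℓ _ _
          exact Finset.prod_nonneg fun i _ => hφnn _
    _ = 2 ^ q * ∏ i : Fin d, ∑ n ∈ J i, ((1:ℝ) + ((n : ℝ)) ^ 2) ^ (-r) := by
        rw [Finset.prod_univ_sum]
    _ ≤ 2 ^ q * ∏ _i : Fin d, K := by
        apply mul_le_mul_of_nonneg_left _ (rpow_nonneg (by norm_num) q)
        apply Finset.prod_le_prod
        · intro i _
          exact Finset.sum_nonneg fun n _ => hφnn n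
        · intro i _
          exact Summable.sum_le_tsum _ (fun n _ => hφnn n) hφ
    _ = 2 ^ q * K ^ d := by rw [Finset.prod_const, Finset.card_univ, Fintype.card_fin]

end Aux

section Main
open Real

lemma rpow_two_mul {x : ℝ} (hx : 0 ≤ x) (c : ℝ) : x ^ (2*c) = (x ^ c) ^ (2:ℕ) := by
  rw [← Real.rpow_natCast (x ^ c) 2, ← Real.rpow_mul hx]
  congr 1
  push_cast; ring

noncomputable def Vf {d : ℕ} (u : (Fin d → ℤ) →₀ (Fin d → ℂ)) (ℓ : Fin d → ℤ) : ℝ :=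
  Real.sqrt (∑ i, ‖u ℓ i‖ ^ 2)

noncomputable def gf {d : ℕ} (s : ℝ) (f : (Fin d → ℤ) →₀ ℂ) (m : Fin d → ℤ) : ℝ :=
  freqNorm m ^ s * ‖f m‖

noncomputable def vf {d : ℕ} (γ : ℝ) (u : (Fin d → ℤ) →₀ (Fin d → ℂ)) (ℓ : Fin d → ℤ) : ℝ :=
  freqNorm ℓ ^ γ * Vf u ℓ

noncomputable def a1f {d : ℕ} (γ : ℝ) (u : (Fin d → ℤ) →₀ (Fin d → ℂ)) (ℓ : Fin d → ℤ) : ℝ :=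
  freqNorm ℓ ^ (1 - γ) * vf γ u ℓ

noncomputable def b2f {d : ℕ} (γ s : ℝ) (f : (Fin d → ℤ) →₀ ℂ) (m : Fin d → ℤ) : ℝ :=
  freqNorm m ^ (1 - γ) * gf s f m

lemma Vf_nonneg {d : ℕ} (u : (Fin d → ℤ) →₀ (Fin d → ℂ)) (ℓ) : 0 ≤ Vf u ℓ :=
  Real.sqrt_nonneg _

lemma gf_nonneg {d : ℕ} (s : ℝ) (f : (Fin d → ℤ) →₀ ℂ) (m) : 0 ≤ gf s f m :=
  mul_nonneg (rpow_nonneg (freqNorm_nonneg m) s) (norm_nonneg _)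

lemma vf_nonneg {d : ℕ} (γ : ℝ) (u : (Fin d → ℤ) →₀ (Fin d → ℂ)) (ℓ) : 0 ≤ vf γ u ℓ :=
  mul_nonneg (rpow_nonneg (freqNorm_nonneg ℓ) γ) (Vf_nonneg u ℓ)

lemma a1f_nonneg {d : ℕ} (γ : ℝ) (u : (Fin d → ℤ) →₀ (Fin d → ℂ)) (ℓ) : 0 ≤ a1f γ u ℓ :=
  mul_nonneg (rpow_nonneg (freqNorm_nonneg ℓ) _) (vf_nonneg γ u ℓ)

lemma b2f_nonneg {d : ℕ} (γ s : ℝ) (f : (Fin d → ℤ) →₀ ℂ) (m) : 0 ≤ b2f γ s f m :=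
  mul_nonneg (rpow_nonneg (freqNorm_nonneg m) _) (gf_nonneg s f m)

lemma gf_eq_zero {d : ℕ} (s : ℝ) (f : (Fin d → ℤ) →₀ ℂ) {m} (hm : m ∉ f.support) :
    gf s f m = 0 := by
  rw [gf, Finsupp.notMem_support_iff.mp hm]
  simp

lemma b2f_eq_zero {d : ℕ} (γ s : ℝ) (f : (Fin d → ℤ) →₀ ℂ) {m} (hm : m ∉ f.support) :
    b2f γ s f m = 0 := by
  rw [b2f, gf_eq_zero s f hm, mul_zero]

lemma complex_cs {d : ℕ} (z : Fin d → ℤ) (w : Fin d → ℂ) :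
    ‖∑ j, ((z j : ℤ) : ℂ) * w j‖ ≤ freqNorm z * Real.sqrt (∑ j, ‖w j‖ ^ 2) := by
  calc ‖∑ j, ((z j : ℤ) : ℂ) * w j‖ ≤ ∑ j, ‖((z j : ℤ) : ℂ) * w j‖ := norm_sum_le _ _
    _ = ∑ j, |((z j : ℤ) : ℝ)| * ‖w j‖ := by
        refine Finset.sum_congr rfl fun j _ => ?_
        rw [norm_mul]
        congr 1
        rw [show ((z j : ℤ) : ℂ) = (((z j : ℤ) : ℝ) : ℂ) by push_cast; ring]
        exact Complex.norm_real _
    _ ≤ Real.sqrt (∑ j, |((z j : ℤ) : ℝ)| ^ 2) * Real.sqrt (∑ j, ‖w j‖ ^ 2) :=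
        cs_sqrt Finset.univ _ _ (fun j _ => abs_nonneg _) (fun j _ => norm_nonneg _)
    _ = freqNorm z * Real.sqrt (∑ j, ‖w j‖ ^ 2) := by
        rw [freqNorm]
        congr 2
        exact Finset.sum_congr rfl fun j _ => sq_abs _

lemma commCoef_eq_zero {d : ℕ} (s : ℝ) (u : (Fin d → ℤ) →₀ (Fin d → ℂ))
    (f : (Fin d → ℤ) →₀ ℂ) (k : Fin d → ℤ)
    (hk : k ∉ Finset.image (fun p : (Fin d → ℤ) × (Fin d → ℤ) => p.1 + p.2)
      (f.support ×ˢ u.support)) : commCoef s u f k = 0 := by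
  rw [commCoef]
  rw [Finset.sum_eq_zero, mul_zero]
  intro ℓ hℓ
  have hf : f (k - ℓ) = 0 := by
    by_contra h
    apply hk
    refine Finset.mem_image.mpr ⟨(k - ℓ, ℓ), ?_, sub_add_cancel k ℓ⟩
    exact Finset.mem_product.mpr ⟨Finsupp.mem_support_iff.mpr h, hℓ⟩
  rw [hf, mul_zero, zero_mul]

set_option maxHeartbeats 1000000 in
lemma pointwise_bound {d : ℕ} (γ s : ℝ) (hs0 : 0 ≤ s) (hsγ : s ≤ γ)
    (u : (Fin d → ℤ) →₀ (Fin d → ℂ)) (f : (Fin d → ℤ) →₀ ℂ)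
    (hu0 : u 0 = 0) (hf0 : f 0 = 0) (k : Fin d → ℤ) (hk0 : k ≠ 0) :
    ‖commCoef s u f k‖ ≤ (s * 2 ^ (s + 2) + 2 ^ (s + 1) + 4) *
      ((∑ ℓ ∈ u.support, a1f γ u ℓ * gf s f (k - ℓ)) +
       (∑ ℓ ∈ u.support, vf γ u ℓ * b2f γ s f (k - ℓ))) := by
  set C₀ : ℝ := s * 2 ^ (s + 2) + 2 ^ (s + 1) + 4 with hC₀
  have hC₀nn : (0:ℝ) ≤ C₀ := by
    have h1 := rpow_nonneg (by norm_num : (0:ℝ) ≤ 2) (s+2)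
    have h2 := rpow_nonneg (by norm_num : (0:ℝ) ≤ 2) (s+1)
    have h3 := mul_nonneg hs0 h1
    rw [hC₀]; linarith
  have hkz : 1 ≤ freqNorm k := one_le_freqNorm hk0
  have hterm : ∀ ℓ ∈ u.support,
      ‖((freqNorm k ^ s - freqNorm (k - ℓ) ^ s : ℝ) : ℂ) * f (k - ℓ) *
        ∑ j, ((k j - ℓ j : ℤ) : ℂ) * u ℓ j‖ ≤
      C₀ * (a1f γ u ℓ * gf s f (k - ℓ) + vf γ u ℓ * b2f γ s f (k - ℓ)) := by
    intro ℓ hℓ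
    have hrhs_nn : 0 ≤ C₀ * (a1f γ u ℓ * gf s f (k - ℓ) + vf γ u ℓ * b2f γ s f (k - ℓ)) := by
      apply mul_nonneg hC₀nn
      apply add_nonneg
      · exact mul_nonneg (a1f_nonneg γ u ℓ) (gf_nonneg s f _)
      · exact mul_nonneg (vf_nonneg γ u ℓ) (b2f_nonneg γ s f _)
    by_cases hfm : f (k - ℓ) = 0
    · rw [hfm]
      simp only [mul_zero, zero_mul, norm_zero]
      exact hrhs_nn
    · have hm0 : k - ℓ ≠ 0 := by
        intro h
        rw [h, hf0] at hfm
        exact hfm rfl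
      have hℓ0 : ℓ ≠ 0 := by
        intro h
        rw [h] at hℓ
        exact Finsupp.mem_support_iff.mp hℓ hu0
      have hx : 1 ≤ freqNorm (k - ℓ) := one_le_freqNorm hm0
      have hy : 1 ≤ freqNorm ℓ := one_le_freqNorm hℓ0
      have hx0 : (0:ℝ) < freqNorm (k - ℓ) := lt_of_lt_of_le one_pos hx
      have hy0 : (0:ℝ) < freqNorm ℓ := lt_of_lt_of_le one_pos hy
      have htri : |freqNorm k - freqNorm (k - ℓ)| ≤ freqNorm ℓ := by
        have h := freqNorm_abs_sub k (k - ℓ)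
        rw [sub_sub_cancel] at h
        exact h
      have hker := kernel_bound hs0 hsγ hx hy hkz htri
      -- norm of the product
      have hnorm1 : ‖((freqNorm k ^ s - freqNorm (k - ℓ) ^ s : ℝ) : ℂ) * f (k - ℓ) *
          ∑ j, ((k j - ℓ j : ℤ) : ℂ) * u ℓ j‖ ≤
          |freqNorm k ^ s - freqNorm (k - ℓ) ^ s| * ‖f (k - ℓ)‖ *
            (freqNorm (k - ℓ) * Vf u ℓ) := by
        rw [norm_mul, norm_mul, Complex.norm_real]
        apply mul_le_mul_of_nonneg_left _ (mul_nonneg (abs_nonneg _) (norm_nonneg _))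
        have h := complex_cs (k - ℓ) (u ℓ)
        simp only [Pi.sub_apply] at h
        exact h
      refine le_trans hnorm1 ?_
      have hFV : (0:ℝ) ≤ ‖f (k - ℓ)‖ * Vf u ℓ := mul_nonneg (norm_nonneg _) (Vf_nonneg u ℓ)
      have e1 : freqNorm ℓ ^ (1-γ) * freqNorm ℓ ^ γ = freqNorm ℓ := by
        rw [← Real.rpow_add hy0]
        norm_num
      have e2 : freqNorm (k - ℓ) ^ (1-γ) * freqNorm (k - ℓ) ^ s =
          freqNorm (k - ℓ) ^ (1 + s - γ) := by
        rw [← Real.rpow_add hx0]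
        congr 1
        ring
      calc |freqNorm k ^ s - freqNorm (k - ℓ) ^ s| * ‖f (k - ℓ)‖ *
            (freqNorm (k - ℓ) * Vf u ℓ)
          = (|freqNorm k ^ s - freqNorm (k - ℓ) ^ s| * freqNorm (k - ℓ)) *
            (‖f (k - ℓ)‖ * Vf u ℓ) := by ring
        _ ≤ (C₀ * (freqNorm ℓ * freqNorm (k - ℓ) ^ s +
              freqNorm ℓ ^ γ * freqNorm (k - ℓ) ^ (1 + s - γ))) *
            (‖f (k - ℓ)‖ * Vf u ℓ) := mul_le_mul_of_nonneg_right hker hFV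
        _ = C₀ * (a1f γ u ℓ * gf s f (k - ℓ) + vf γ u ℓ * b2f γ s f (k - ℓ)) := by
            simp only [a1f, vf, b2f, gf]
            linear_combination (-(C₀ * ‖f (k - ℓ)‖ * Vf u ℓ * freqNorm (k - ℓ) ^ s)) * e1 +
              (-(C₀ * freqNorm ℓ ^ γ * Vf u ℓ * ‖f (k - ℓ)‖)) * e2
  calc ‖commCoef s u f k‖
      = ‖∑ ℓ ∈ u.support, ((freqNorm k ^ s - freqNorm (k - ℓ) ^ s : ℝ) : ℂ) * f (k - ℓ) *
          ∑ j, ((k j - ℓ j : ℤ) : ℂ) * u ℓ j‖ := by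
        rw [commCoef, norm_mul, Complex.norm_I, one_mul]
    _ ≤ ∑ ℓ ∈ u.support, ‖((freqNorm k ^ s - freqNorm (k - ℓ) ^ s : ℝ) : ℂ) * f (k - ℓ) *
          ∑ j, ((k j - ℓ j : ℤ) : ℂ) * u ℓ j‖ := norm_sum_le _ _
    _ ≤ ∑ ℓ ∈ u.support,
          C₀ * (a1f γ u ℓ * gf s f (k - ℓ) + vf γ u ℓ * b2f γ s f (k - ℓ)) :=
        Finset.sum_le_sum hterm
    _ = C₀ * ((∑ ℓ ∈ u.support, a1f γ u ℓ * gf s f (k - ℓ)) +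
          (∑ ℓ ∈ u.support, vf γ u ℓ * b2f γ s f (k - ℓ))) := by
        rw [← Finset.mul_sum, Finset.sum_add_distrib]

end Main

set_option maxHeartbeats 2000000 in
/-- Commutator estimate: for `γ > d/2 + 1` and `s ∈ [0, γ]` there is `C = C(γ,d,s)` such
that for every mean-zero divergence-free `u ∈ H^γ(𝕋^d;ℝ^d)` and mean-zero `f ∈ H^s(𝕋^d)`,
`‖[Λ^s, u·∇]f‖_{L²} ≤ C ‖u‖_{H^γ} ‖f‖_{H^s}`. -/
theorem stmt6 (d : ℕ) (hd : 1 ≤ d) (γ s : ℝ) (hγ : (d : ℝ) / 2 + 1 < γ)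
    (hs0 : 0 ≤ s) (hsγ : s ≤ γ) :
    ∃ C : ℝ, 0 < C ∧
      ∀ (u : (Fin d → ℤ) →₀ (Fin d → ℂ)) (f : (Fin d → ℤ) →₀ ℂ),
        u 0 = 0 → f 0 = 0 →
        (∀ k, ∑ j, ((k j : ℂ)) * u k j = 0) →
        Real.sqrt (∑' k : {k : Fin d → ℤ // k ≠ 0}, ‖commCoef s u f k.val‖ ^ 2) ≤
          C * hsNormVec γ u * hsNorm s f := by
  classical
  have hq : (d:ℝ)/2 < γ - 1 := by linarith
  obtain ⟨S, hSpos, hS⟩ := lattice_bound d hd hq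
  set C₀ : ℝ := s * 2 ^ (s + 2) + 2 ^ (s + 1) + 4 with hC₀
  have hC₀pos : 0 < C₀ := by
    have h1 := Real.rpow_nonneg (by norm_num : (0:ℝ) ≤ 2) (s+2)
    have h2 := Real.rpow_pos_of_pos (by norm_num : (0:ℝ) < 2) (s+1)
    have h3 := mul_nonneg hs0 h1
    rw [hC₀]; linarith
  refine ⟨2 * C₀ * Real.sqrt S, by positivity, ?_⟩
  intro u f hu0 hf0 _hdiv
  have hTne : ∀ ℓ ∈ u.support, ℓ ≠ 0 := by
    intro ℓ hℓ h0; rw [h0] at hℓ; exact Finsupp.mem_support_iff.mp hℓ hu0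
  have hMne : ∀ m ∈ f.support, m ≠ 0 := by
    intro m hm h0; rw [h0] at hm; exact Finsupp.mem_support_iff.mp hm hf0
  set W := ∑ ℓ ∈ u.support, (vf γ u ℓ)^2 with hW
  set G := ∑ m ∈ f.support, (gf s f m)^2 with hG
  have hWnn : 0 ≤ W := Finset.sum_nonneg fun ℓ _ => sq_nonneg _
  have hGnn : 0 ≤ G := Finset.sum_nonneg fun m _ => sq_nonneg _
  have hWid : hsNormVec γ u = Real.sqrt W := by
    rw [hsNormVec, hW]
    congr 1
    refine Finset.sum_congr rfl fun ℓ _ => ?_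
    rw [vf, mul_pow, Vf, Real.sq_sqrt (Finset.sum_nonneg fun i _ => sq_nonneg _),
      rpow_two_mul (freqNorm_nonneg ℓ) γ]
  have hGid : hsNorm s f = Real.sqrt G := by
    rw [hsNorm, hG]
    congr 1
    refine Finset.sum_congr rfl fun m _ => ?_
    rw [gf, mul_pow, rpow_two_mul (freqNorm_nonneg m) s]
  -- the support of the commutator coefficients
  have htsum : (∑' k : {k : Fin d → ℤ // k ≠ 0}, ‖commCoef s u f k.val‖ ^ 2)
      = ∑ k ∈ (Finset.image (fun p : (Fin d → ℤ) × (Fin d → ℤ) => p.1 + p.2)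
          (f.support ×ˢ u.support)).filter (fun k => k ≠ 0),
          ‖commCoef s u f k‖ ^ 2 := by
    rw [tsum_eq_sum (s := (Finset.image (fun p : (Fin d → ℤ) × (Fin d → ℤ) => p.1 + p.2)
        (f.support ×ˢ u.support)).subtype (fun k => k ≠ 0))
      (f := fun k : {k : Fin d → ℤ // k ≠ 0} => ‖commCoef s u f k.val‖ ^ 2) ?_]
    · exact Finset.sum_subtype_eq_sum_filter
        (fun k => ‖commCoef s u f k‖ ^ 2) (p := fun k => k ≠ 0)
    · intro b hb
      have hbB : (b : Fin d → ℤ) ∉ Finset.image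
          (fun p : (Fin d → ℤ) × (Fin d → ℤ) => p.1 + p.2) (f.support ×ˢ u.support) :=
        fun h => hb (Finset.mem_subtype.mpr h)
      show ‖commCoef s u f (b : Fin d → ℤ)‖ ^ 2 = 0
      rw [commCoef_eq_zero s u f b hbB]
      simp
  -- pointwise bound
  have hpoint : ∀ k ∈ (Finset.image (fun p : (Fin d → ℤ) × (Fin d → ℤ) => p.1 + p.2)
      (f.support ×ˢ u.support)).filter (fun k => k ≠ 0),
      ‖commCoef s u f k‖ ≤ C₀ *
        ((∑ ℓ ∈ u.support, a1f γ u ℓ * gf s f (k - ℓ)) +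
         (∑ ℓ ∈ u.support, vf γ u ℓ * b2f γ s f (k - ℓ))) := by
    intro k hk
    have hk0 : k ≠ 0 := (Finset.mem_filter.mp hk).2
    have h := pointwise_bound γ s hs0 hsγ u f hu0 hf0 k hk0
    rw [← hC₀] at h
    exact h
  -- Young inequalities
  have hP2 := young1 ((Finset.image (fun p : (Fin d → ℤ) × (Fin d → ℤ) => p.1 + p.2)
      (f.support ×ˢ u.support)).filter (fun k => k ≠ 0)) u.support f.support
      (a1f γ u) (gf s f) (a1f_nonneg γ u) (gf_nonneg s f) (fun m hm => gf_eq_zero s f hm)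
  have hQ2 := young2 ((Finset.image (fun p : (Fin d → ℤ) × (Fin d → ℤ) => p.1 + p.2)
      (f.support ×ˢ u.support)).filter (fun k => k ≠ 0)) u.support f.support
      (vf γ u) (b2f γ s f) (vf_nonneg γ u) (b2f_nonneg γ s f)
      (fun m hm => b2f_eq_zero γ s f hm)
  -- Cauchy-Schwarz + lattice bounds on the ℓ¹ factors
  have hlatT : ∑ ℓ ∈ u.support, (freqNorm ℓ ^ (1-γ))^2 ≤ S := by
    refine le_trans (le_of_eq (Finset.sum_congr rfl fun ℓ _ => ?_)) (hS u.support hTne)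
    rw [← rpow_two_mul (freqNorm_nonneg ℓ) (1-γ)]
    congr 1; ring
  have hlatM : ∑ m ∈ f.support, (freqNorm m ^ (1-γ))^2 ≤ S := by
    refine le_trans (le_of_eq (Finset.sum_congr rfl fun m _ => ?_)) (hS f.support hMne)
    rw [← rpow_two_mul (freqNorm_nonneg m) (1-γ)]
    congr 1; ring
  have ha1 : (∑ ℓ ∈ u.support, a1f γ u ℓ)^2 ≤ S * W := by
    have hcs := Finset.sum_mul_sq_le_sq_mul_sq u.support
      (fun ℓ => freqNorm ℓ ^ (1-γ)) (vf γ u)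
    calc (∑ ℓ ∈ u.support, a1f γ u ℓ)^2
        = (∑ ℓ ∈ u.support, freqNorm ℓ ^ (1-γ) * vf γ u ℓ)^2 := by
          congr 1
      _ ≤ (∑ ℓ ∈ u.support, (freqNorm ℓ ^ (1-γ))^2) * W := hcs
      _ ≤ S * W := mul_le_mul_of_nonneg_right hlatT hWnn
  have hb2 : (∑ m ∈ f.support, b2f γ s f m)^2 ≤ S * G := by
    have hcs := Finset.sum_mul_sq_le_sq_mul_sq f.support
      (fun m => freqNorm m ^ (1-γ)) (gf s f)
    calc (∑ m ∈ f.support, b2f γ s f m)^2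
        = (∑ m ∈ f.support, freqNorm m ^ (1-γ) * gf s f m)^2 := by
          congr 1
      _ ≤ (∑ m ∈ f.support, (freqNorm m ^ (1-γ))^2) * G := hcs
      _ ≤ S * G := mul_le_mul_of_nonneg_right hlatM hGnn
  -- combine
  have hfinal : ∑ k ∈ (Finset.image (fun p : (Fin d → ℤ) × (Fin d → ℤ) => p.1 + p.2)
      (f.support ×ˢ u.support)).filter (fun k => k ≠ 0), ‖commCoef s u f k‖ ^ 2 ≤
      4 * C₀^2 * S * W * G := by
    calc ∑ k ∈ (Finset.image (fun p : (Fin d → ℤ) × (Fin d → ℤ) => p.1 + p.2)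
          (f.support ×ˢ u.support)).filter (fun k => k ≠ 0), ‖commCoef s u f k‖ ^ 2
        ≤ ∑ k ∈ (Finset.image (fun p : (Fin d → ℤ) × (Fin d → ℤ) => p.1 + p.2)
          (f.support ×ˢ u.support)).filter (fun k => k ≠ 0),
          C₀^2 * (2 * (∑ ℓ ∈ u.support, a1f γ u ℓ * gf s f (k - ℓ))^2 +
            2 * (∑ ℓ ∈ u.support, vf γ u ℓ * b2f γ s f (k - ℓ))^2) := by
          apply Finset.sum_le_sum
          intro k hk
          have h1 := hpoint k hk
          have hccnn : (0:ℝ) ≤ ‖commCoef s u f k‖ := norm_nonneg _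
          have h2 : ‖commCoef s u f k‖^2 ≤ (C₀ *
              ((∑ ℓ ∈ u.support, a1f γ u ℓ * gf s f (k - ℓ)) +
               (∑ ℓ ∈ u.support, vf γ u ℓ * b2f γ s f (k - ℓ))))^2 :=
            pow_le_pow_left₀ hccnn h1 2
          refine le_trans h2 ?_
          have hsq := sq_nonneg ((∑ ℓ ∈ u.support, a1f γ u ℓ * gf s f (k - ℓ)) -
            (∑ ℓ ∈ u.support, vf γ u ℓ * b2f γ s f (k - ℓ)))
          nlinarith [sq_nonneg C₀]
      _ = C₀^2 * (2 * (∑ k ∈ (Finset.image (fun p : (Fin d → ℤ) × (Fin d → ℤ) => p.1 + p.2)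
            (f.support ×ˢ u.support)).filter (fun k => k ≠ 0),
            (∑ ℓ ∈ u.support, a1f γ u ℓ * gf s f (k - ℓ))^2) +
          2 * (∑ k ∈ (Finset.image (fun p : (Fin d → ℤ) × (Fin d → ℤ) => p.1 + p.2)
            (f.support ×ˢ u.support)).filter (fun k => k ≠ 0),
            (∑ ℓ ∈ u.support, vf γ u ℓ * b2f γ s f (k - ℓ))^2)) := by
          rw [← Finset.mul_sum]
          congr 1
          rw [Finset.sum_add_distrib, ← Finset.mul_sum, ← Finset.mul_sum]
      _ ≤ C₀^2 * (2 * ((S * W) * G) + 2 * ((S * G) * W)) := by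
          apply mul_le_mul_of_nonneg_left _ (sq_nonneg C₀)
          have h1 : (∑ k ∈ (Finset.image (fun p : (Fin d → ℤ) × (Fin d → ℤ) => p.1 + p.2)
              (f.support ×ˢ u.support)).filter (fun k => k ≠ 0),
              (∑ ℓ ∈ u.support, a1f γ u ℓ * gf s f (k - ℓ))^2) ≤ (S * W) * G :=
            le_trans hP2 (mul_le_mul_of_nonneg_right ha1 hGnn)
          have h2 : (∑ k ∈ (Finset.image (fun p : (Fin d → ℤ) × (Fin d → ℤ) => p.1 + p.2)
              (f.support ×ˢ u.support)).filter (fun k => k ≠ 0),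
              (∑ ℓ ∈ u.support, vf γ u ℓ * b2f γ s f (k - ℓ))^2) ≤ (S * G) * W :=
            le_trans hQ2 (mul_le_mul_of_nonneg_right hb2 hWnn)
          linarith
      _ = 4 * C₀^2 * S * W * G := by ring
  rw [htsum, hWid, hGid]
  calc Real.sqrt (∑ k ∈ (Finset.image (fun p : (Fin d → ℤ) × (Fin d → ℤ) => p.1 + p.2)
        (f.support ×ˢ u.support)).filter (fun k => k ≠ 0), ‖commCoef s u f k‖ ^ 2)
      ≤ Real.sqrt (4 * C₀^2 * S * W * G) := Real.sqrt_le_sqrt hfinal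
    _ = 2 * C₀ * Real.sqrt S * Real.sqrt W * Real.sqrt G := by
        rw [show 4 * C₀^2 * S * W * G =
            (2 * C₀ * Real.sqrt S * Real.sqrt W * Real.sqrt G)^2 by
          rw [mul_pow, mul_pow, mul_pow, mul_pow, Real.sq_sqrt hSpos.le,
            Real.sq_sqrt hWnn, Real.sq_sqrt hGnn]
          ring]
        exact Real.sqrt_sq (by positivity)
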